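/- arXiv:2301.04890 — 7 statements merged into one kernel-verified Lean document; each statement's English description precedes it below -/
import Mathlib

section
/- Let ι and κ be finite types, A1 an ι×ι real matrix, A2 an ι×κ real matrix, t a real number, and let A be the (ι⊕κ)×(ι⊕κ) real block matrix A = fromBlocks A1 A2 0 0. Then the matrix series S(t) = Σ_{k=1}^∞ (t^k / k!) · A1^(k-1) * A2 converges, and the matrix exponential of tA is the block matrix exp(tA) = fromBlocks (exp(t·A1)) (S(t)) 0 Id, where Id is the κ×κ identity matrix. -/
/-!
Since `fromBlocks A B 0 0 ^ (k + 1) = fromBlocks (A ^ (k + 1)) (A ^ k * B) 0 0`, summing the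
exponential series block by block gives `exp A` in the upper-left corner, the series
`∑ (k + 1)!⁻¹ • A ^ k * B` in the upper-right corner and `1` (from the `k = 0` term alone) in the
lower-right one. The theorem is the case `A = t • A1`, `B = t • A2`.
-/

open Matrix NormedSpace Nat

theorem HasSum.matrix_submatrix {X R l m n o : Type*} [AddCommMonoid R] [TopologicalSpace R]
    {f : X → Matrix m n R} {a : Matrix m n R} (hf : HasSum f a) (r : l → m) (c : o → n) :
    HasSum (fun x => (f x).submatrix r c) (a.submatrix r c) :=
  Pi.hasSum.2 fun i => Pi.hasSum.2 fun j => Pi.hasSum.1 (Pi.hasSum.1 hf (r i)) (c j)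

section BlockSums

variable {X R l m n o : Type*} [AddCommMonoid R] [TopologicalSpace R]
  {f : X → Matrix (n ⊕ o) (l ⊕ m) R} {M : Matrix (n ⊕ o) (l ⊕ m) R}

theorem HasSum.matrix_toBlocks₁₁ (hf : HasSum f M) :
    HasSum (fun x => (f x).toBlocks₁₁) M.toBlocks₁₁ :=
  hf.matrix_submatrix _ _

theorem HasSum.matrix_toBlocks₁₂ (hf : HasSum f M) :
    HasSum (fun x => (f x).toBlocks₁₂) M.toBlocks₁₂ :=
  hf.matrix_submatrix _ _

theorem HasSum.matrix_toBlocks₂₁ (hf : HasSum f M) :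
    HasSum (fun x => (f x).toBlocks₂₁) M.toBlocks₂₁ :=
  hf.matrix_submatrix _ _

theorem HasSum.matrix_toBlocks₂₂ (hf : HasSum f M) :
    HasSum (fun x => (f x).toBlocks₂₂) M.toBlocks₂₂ :=
  hf.matrix_submatrix _ _

end BlockSums

namespace Matrix

variable {m n : Type*} [Fintype m] [Fintype n] [DecidableEq m] [DecidableEq n]

theorem fromBlocks_zero_zero_pow_succ {α : Type*} [Semiring α] (A : Matrix m m α)
    (B : Matrix m n α) (k : ℕ) :
    fromBlocks A B (0 : Matrix n m _) 0 ^ (k + 1) = fromBlocks (A ^ (k + 1)) (A ^ k * B) 0 0 := by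
  induction k with
  | zero => simp
  | succ k ih => rw [pow_succ, ih, fromBlocks_multiply]; simp [pow_succ, Matrix.mul_assoc]

variable {𝕂 : Type*} [RCLike 𝕂]

-- The operator norm is only a device to reach `exp_series_hasSum_exp'`: every matrix norm induces
-- the product topology, so the statement does not depend on it.
theorem hasSum_exp_series (A : Matrix m m 𝕂) :
    HasSum (fun k => (k !⁻¹ : 𝕂) • A ^ k) (exp A) :=
  open scoped Norms.Operator in exp_series_hasSum_exp' A

variable (A : Matrix m m 𝕂) (B : Matrix m n 𝕂)

theorem exp_fromBlocks_zero_zero_toBlocks₁₁ :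
    (exp (fromBlocks A B (0 : Matrix n m _) 0)).toBlocks₁₁ = exp A := by
  refine ((hasSum_exp_series _).matrix_toBlocks₁₁).unique ?_
  convert hasSum_exp_series A using 2 with k
  cases k <;> simp [fromBlocks_zero_zero_pow_succ, ← fromBlocks_one, fromBlocks_smul]

theorem exp_fromBlocks_zero_zero_toBlocks₂₁ :
    (exp (fromBlocks A B (0 : Matrix n m _) 0)).toBlocks₂₁ = 0 := by
  refine ((hasSum_exp_series _).matrix_toBlocks₂₁).unique ?_
  convert hasSum_zero with k
  cases k <;> simp [fromBlocks_zero_zero_pow_succ, ← fromBlocks_one, fromBlocks_smul]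

theorem exp_fromBlocks_zero_zero_toBlocks₂₂ :
    (exp (fromBlocks A B (0 : Matrix n m _) 0)).toBlocks₂₂ = 1 := by
  refine ((hasSum_exp_series _).matrix_toBlocks₂₂).unique ?_
  convert hasSum_ite_eq 0 (1 : Matrix n n 𝕂) with k
  cases k <;> simp [fromBlocks_zero_zero_pow_succ, ← fromBlocks_one, fromBlocks_smul]

theorem hasSum_exp_fromBlocks_zero_zero_toBlocks₁₂ :
    HasSum (fun k : ℕ => ((k + 1)! : 𝕂)⁻¹ • (A ^ k * B))
      (exp (fromBlocks A B (0 : Matrix n m _) 0)).toBlocks₁₂ := by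
  have h := (hasSum_exp_series (fromBlocks A B (0 : Matrix n m _) 0)).matrix_toBlocks₁₂
  rw [← hasSum_nat_add_iff' 1] at h
  simpa [fromBlocks_zero_zero_pow_succ, ← fromBlocks_one, fromBlocks_smul] using h

theorem exp_fromBlocks_zero_zero :
    exp (fromBlocks A B (0 : Matrix n m _) 0) =
      fromBlocks (exp A) (∑' k : ℕ, ((k + 1)! : 𝕂)⁻¹ • (A ^ k * B)) (0 : Matrix n m 𝕂) 1 := by
  conv_lhs => rw [← fromBlocks_toBlocks (exp _)]
  rw [exp_fromBlocks_zero_zero_toBlocks₁₁, exp_fromBlocks_zero_zero_toBlocks₂₁,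
    exp_fromBlocks_zero_zero_toBlocks₂₂, (hasSum_exp_fromBlocks_zero_zero_toBlocks₁₂ A B).tsum_eq]

end Matrix

/-- Block exponential computation used in the proof of Lemma 2.2: for the block matrix
`A = fromBlocks A1 A2 0 0`, the series `S(t) = ∑_{k=1}^∞ (t^k/k!) • A1^(k-1) * A2`
converges and `exp (t • A) = fromBlocks (exp (t • A1)) (S t) 0 1`. -/
theorem stmt_1 {ι κ : Type*} [Fintype ι] [Fintype κ] [DecidableEq ι] [DecidableEq κ]
    (A1 : Matrix ι ι ℝ) (A2 : Matrix ι κ ℝ) (t : ℝ) :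
    Summable (fun k : ℕ =>
      ((t ^ (k + 1) / (Nat.factorial (k + 1) : ℝ)) • (A1 ^ k * A2) : Matrix ι κ ℝ)) ∧
    NormedSpace.exp (t • Matrix.fromBlocks A1 A2 (0 : Matrix κ ι ℝ) (0 : Matrix κ κ ℝ)) =
      Matrix.fromBlocks (NormedSpace.exp (t • A1))
        (∑' k : ℕ, ((t ^ (k + 1) / (Nat.factorial (k + 1) : ℝ)) • (A1 ^ k * A2) : Matrix ι κ ℝ))
        (0 : Matrix κ ι ℝ) (1 : Matrix κ κ ℝ) := by
  have hterms : (fun k : ℕ => ((k + 1)! : ℝ)⁻¹ • ((t • A1) ^ k * (t • A2))) =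
      fun k => (t ^ (k + 1) / (k + 1)! : ℝ) • (A1 ^ k * A2) := by
    funext k
    rw [smul_pow, Matrix.smul_mul, Matrix.mul_smul, smul_smul, smul_smul]
    congr 1
    ring
  have hsum := hasSum_exp_fromBlocks_zero_zero_toBlocks₁₂ (t • A1) (t • A2)
  rw [hterms] at hsum
  refine ⟨hsum.summable, ?_⟩
  rw [fromBlocks_smul, smul_zero, smul_zero, exp_fromBlocks_zero_zero, hterms]
end

section
/- Let V be a finite nonempty set, let r : V × V → ℝ satisfy r(x,y) = r(y,x) ≥ 0 and r(x,x) = 0 for all x, y ∈ V, and set r(x) = Σ_{y∈V} r(x,y). Let b > 0 and let A be the (V⊕V)×(V⊕V) real matrix given in block form by A = fromBlocks A1 A2 0 0, where A1(x,x) = b − r(x), A1(x,y) = r(x,y) for x ≠ y, and A2(x,y) = r(x,y). Then for every t ≥ 0 and every y ∈ V: Σ_{x∈V} exp(tA)(inl x, inl y) = e^{bt} and Σ_{x∈V} exp(tA)(inl x, inr y) = b^{-1}(e^{bt} − 1) · r(y). -/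
/-!
Let `e = (1, 0)` be the indicator of the alive types and `g = (0, r(·))`. Symmetry of `r` and
`r(x,x) = 0` make every column of `A1` sum to `b` and give `e A = b e + g`, `g A = 0`. Hence
`b e + g` and `g` are left eigenvectors of `A` for `b` and `0`, so
`e exp(tA) = e^{bt} e + b⁻¹(e^{bt} − 1) g`, and the column sums over alive rows are the
coordinates of `e exp(tA)`.
-/

open Matrix

namespace Matrix

variable {n : Type*} [Fintype n] [DecidableEq n]

theorem vecMul_pow_of_vecMul_eq_smul {R : Type*} [CommSemiring R] {A : Matrix n n R}
    {v : n → R} {μ : R} (h : v ᵥ* A = μ • v) (k : ℕ) : v ᵥ* A ^ k = μ ^ k • v := by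
  induction k with
  | zero => simp
  | succ k ih => rw [pow_succ, ← vecMul_vecMul, ih, smul_vecMul, h, smul_smul, pow_succ]

variable {𝕂 : Type*} [RCLike 𝕂]

open scoped Norms.Operator in
theorem vecMul_exp_of_vecMul_eq_smul {A : Matrix n n 𝕂} {v : n → 𝕂} {μ : 𝕂}
    (h : v ᵥ* A = μ • v) : v ᵥ* NormedSpace.exp A = NormedSpace.exp μ • v := by
  have hA := (NormedSpace.exp_series_hasSum_exp' (𝕂 := 𝕂) A).map
    (vecMulBilin 𝕂 𝕂 v).toAddMonoidHom (continuous_const.matrix_vecMul continuous_id)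
  have hμ := (NormedSpace.exp_series_hasSum_exp' (𝕂 := 𝕂) μ).smul_const v
  refine hA.unique ?_
  convert hμ using 2 with k
  simp [vecMul_pow_of_vecMul_eq_smul h, smul_smul]

theorem vecMul_exp_smul_of_vecMul_eq {A : Matrix n n 𝕂} {v w : n → 𝕂} {μ : 𝕂} (hμ : μ ≠ 0)
    (hv : v ᵥ* A = μ • v + w) (hw : w ᵥ* A = 0) (t : 𝕂) :
    v ᵥ* NormedSpace.exp (t • A) =
      NormedSpace.exp (μ * t) • v + (μ⁻¹ * (NormedSpace.exp (μ * t) - 1)) • w := by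
  have hu : (μ • v + w) ᵥ* (t • A) = (μ * t) • (μ • v + w) := by
    rw [vecMul_smul, add_vecMul, smul_vecMul, hv, hw]
    module
  have hw' : w ᵥ* (t • A) = (0 : 𝕂) • w := by
    rw [vecMul_smul, hw, smul_zero, zero_smul]
  have hv' : v = μ⁻¹ • ((μ • v + w) - w) := by
    rw [add_sub_cancel_right, smul_smul, inv_mul_cancel₀ hμ, one_smul]
  rw [hv', smul_vecMul, sub_vecMul, vecMul_exp_of_vecMul_eq_smul hu,
    vecMul_exp_of_vecMul_eq_smul hw', NormedSpace.exp_zero, one_smul]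
  match_scalars
  · field_simp
  · ring

theorem sum_inl_apply_eq_vecMul {V W R : Type*} [Fintype V] [Semiring R]
    (M : Matrix (V ⊕ V) W R) (j : W) :
    ∑ x, M (Sum.inl x) j = (Sum.elim 1 0 ᵥ* M) j := by
  simp [vecMul, dotProduct, Fintype.sum_sum_type]

end Matrix

section SymmetricRates

variable {V : Type*} [Fintype V] {r : V → V → ℝ}

theorem sum_left_eq_sum_right_of_symm (hsymm : ∀ x y, r x y = r y x) (y : V) :
    ∑ x, r x y = ∑ w, r y w :=
  Finset.sum_congr rfl fun x _ => hsymm x y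

theorem sum_ite_sub_sum_eq_of_symm [DecidableEq V] (hsymm : ∀ x y, r x y = r y x)
    (hdiag : ∀ x, r x x = 0) (b : ℝ) (z : V) :
    ∑ x, (if x = z then b - ∑ w, r x w else r x z) = b := by
  have hsplit : ∀ x, (if x = z then b - ∑ w, r x w else r x z) =
      (if x = z then b - ∑ w, r z w else 0) + r x z := by
    intro x
    split_ifs with h
    · subst h; rw [hdiag, add_zero]
    · rw [zero_add]
  simp only [hsplit, Finset.sum_add_distrib, Finset.sum_ite_eq', Finset.mem_univ, if_true,
    sum_left_eq_sum_right_of_symm hsymm, sub_add_cancel]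

end SymmetricRates

theorem stmt_4_general {V : Type*} [Fintype V] [DecidableEq V]
    (r : V → V → ℝ) (hsymm : ∀ x y, r x y = r y x)
    (hdiag : ∀ x, r x x = 0) (b : ℝ) (hb : 0 < b) (t : ℝ) (y : V) :
    let A1 : Matrix V V ℝ := fun x z => if x = z then b - ∑ w : V, r x w else r x z
    let A2 : Matrix V V ℝ := fun x z => r x z
    let A : Matrix (V ⊕ V) (V ⊕ V) ℝ :=
      Matrix.fromBlocks A1 A2 (0 : Matrix V V ℝ) (0 : Matrix V V ℝ)
    (∑ x : V, NormedSpace.exp (t • A) (Sum.inl x) (Sum.inl y) = Real.exp (b * t)) ∧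
    (∑ x : V, NormedSpace.exp (t • A) (Sum.inl x) (Sum.inr y)
        = b⁻¹ * (Real.exp (b * t) - 1) * ∑ w : V, r y w) := by
  intro A1 A2 A
  set ghost : V ⊕ V → ℝ := Sum.elim 0 fun x => ∑ w, r x w
  have halive : (Sum.elim 1 0 : V ⊕ V → ℝ) ᵥ* A = b • (Sum.elim 1 0 : V ⊕ V → ℝ) + ghost := by
    simp only [A, vecMul_fromBlocks]
    ext (z | z)
    · simp [A1, ghost, vecMul, dotProduct, sum_ite_sub_sum_eq_of_symm hsymm hdiag]
    · simp [A2, ghost, vecMul, dotProduct, sum_left_eq_sum_right_of_symm hsymm]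
  have hghost : ghost ᵥ* A = 0 := by
    simp [A, ghost, vecMul_fromBlocks]
  have hexp := vecMul_exp_smul_of_vecMul_eq hb.ne' halive hghost t
  rw [← Real.exp_eq_exp_ℝ] at hexp
  refine ⟨?_, ?_⟩ <;> rw [sum_inl_apply_eq_vecMul, hexp] <;> simp [ghost]

/-- The computation `z₀ e^{At} = M (e^{bt},…; b⁻¹(e^{bt}−1) r(·),…)` from the proof of
Lemma 2.2: for the generator `A = fromBlocks A1 A2 0 0` of the first-moment semigroup of
the branching process (alive types in the first copy of `V`, ghost types in the second),
the column sums of `exp (t • A)` over the alive rows are `e^{bt}` in the alive columns and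
`b⁻¹(e^{bt}−1) r(y)` in the ghost columns. -/
theorem stmt_4 {V : Type*} [Fintype V] [DecidableEq V] [Nonempty V]
    (r : V → V → ℝ) (hsymm : ∀ x y, r x y = r y x) (hnonneg : ∀ x y, 0 ≤ r x y)
    (hdiag : ∀ x, r x x = 0) (b : ℝ) (hb : 0 < b) (t : ℝ) (ht : 0 ≤ t) (y : V) :
    let A1 : Matrix V V ℝ := fun x z => if x = z then b - ∑ w : V, r x w else r x z
    let A2 : Matrix V V ℝ := fun x z => r x z
    let A : Matrix (V ⊕ V) (V ⊕ V) ℝ :=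
      Matrix.fromBlocks A1 A2 (0 : Matrix V V ℝ) (0 : Matrix V V ℝ)
    (∑ x : V, NormedSpace.exp (t • A) (Sum.inl x) (Sum.inl y) = Real.exp (b * t)) ∧
    (∑ x : V, NormedSpace.exp (t • A) (Sum.inl x) (Sum.inr y)
        = b⁻¹ * (Real.exp (b * t) - 1) * ∑ w : V, r y w) :=
  stmt_4_general r hsymm hdiag b hb t y
end

section
/- Let V be a finite nonempty set, r : V × V → ℝ with r(x,y) = r(y,x) ≥ 0 and r(x,x) = 0, and r(x) = Σ_{y∈V} r(x,y). Let b > 0, M ≥ 0, T ≥ 0, and let A be the (V⊕V)×(V⊕V) real matrix A = fromBlocks A1 A2 0 0 with A1(x,x) = b − r(x), A1(x,y) = r(x,y) for x ≠ y, and A2(x,y) = r(x,y). Let z : V⊕V → ℝ be a row vector with 0 ≤ z(inl x) ≤ M and z(inr x) = 0 for every x ∈ V. Then for every subset K ⊆ V, Σ_{y∈K} [ (z ⬝ exp(TA))(inl y) + (z ⬝ exp(TA))(inr y) ] ≤ M e^{bT} Σ_{y∈K} (1 + r(y)/b), where z ⬝ exp(TA) denotes the row-vector–matrix product (vecMul).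 -/
/-!
The generator `A` is nonnegative off the diagonal, so `exp (T • A)` is entrywise nonnegative.
The weight `φ = branchingWeight r b`, equal to `1` on alive types and `r(y)/b` on ghost types,
is a left eigenvector of `A` with eigenvalue `b`: the columns of `A1` sum to `b` and those of
`A2` to `r(y)`. Since `z ≤ M φ` entrywise, `z ⬝ exp(TA) ≤ M φ ⬝ exp(TA) = M e^{bT} φ`, and summing over `K` gives
the bound.
-/

open Matrix NormedSpace
open scoped Nat

namespace Matrix

variable {n : Type*} [Fintype n] [DecidableEq n]

open scoped Matrix.Norms.Operator in
theorem exp_series_hasSum_exp {𝕂 : Type*} [RCLike 𝕂] (M : Matrix n n 𝕂) :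
    HasSum (fun k : ℕ => ((k ! : 𝕂)⁻¹) • M ^ k) (exp M) :=
  exp_series_hasSum_exp' M

theorem vecMul_exp_of_vecMul_eq_smul_s6 {𝕂 : Type*} [RCLike 𝕂] {M : Matrix n n 𝕂} {v : n → 𝕂}
    {c : 𝕂} (h : v ᵥ* M = c • v) : v ᵥ* exp M = exp c • v := by
  have hpow : ∀ k : ℕ, v ᵥ* (M ^ k) = c ^ k • v := by
    intro k
    induction k with
    | zero => rw [pow_zero, vecMul_one, pow_zero, one_smul]
    | succ k ih => rw [pow_succ, ← vecMul_vecMul, ih, smul_vecMul, h, smul_smul, pow_succ]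
  let vecMulLeft : Matrix n n 𝕂 →+ (n → 𝕂) :=
    AddMonoidHom.mk' (v ᵥ* ·) fun A B => vecMul_add A B v
  refine ((exp_series_hasSum_exp M).map vecMulLeft
    (continuous_const.matrix_vecMul continuous_id)).unique ?_
  convert (exp_series_hasSum_exp' (𝕂 := 𝕂) c).smul_const v using 2 with k
  simp [vecMulLeft, vecMul_smul, hpow, smul_smul]

theorem exp_apply_nonneg {M : Matrix n n ℝ} (hM : ∀ i j, 0 ≤ M i j) (i j : n) :
    0 ≤ exp M i j := by
  have hpow : ∀ k : ℕ, ∀ i j, 0 ≤ (M ^ k) i j := by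
    intro k
    induction k with
    | zero => intro i j; rw [pow_zero, one_apply]; split_ifs <;> norm_num
    | succ k ih =>
      intro i j
      rw [pow_succ, mul_apply]
      exact Finset.sum_nonneg fun l _ => mul_nonneg (ih i l) (hM l j)
  exact ((Pi.hasSum.mp (Pi.hasSum.mp (exp_series_hasSum_exp M) i) j)).nonneg
    fun k => mul_nonneg (by positivity) (hpow k i j)

theorem exp_apply_nonneg_of_offDiag_nonneg {M : Matrix n n ℝ}
    (hM : ∀ i j, i ≠ j → 0 ≤ M i j) (i j : n) : 0 ≤ exp M i j := by
  -- A scalar shift makes `M` entrywise nonnegative and only rescales `exp M` by `e^c`.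
  set c : ℝ := ∑ k, |M k k|
  set N : Matrix n n ℝ := M + diagonal fun _ => c
  have hN : ∀ i j, 0 ≤ N i j := by
    intro i j
    rcases eq_or_ne i j with rfl | hij
    · have : |M i i| ≤ c := Finset.single_le_sum (f := fun k => |M k k|)
        (fun k _ => abs_nonneg _) (Finset.mem_univ i)
      simp only [N, add_apply, diagonal_apply_eq]
      linarith [neg_abs_le (M i i)]
    · simpa [N, diagonal_apply_ne _ hij] using hM i j hij
  have hsplit : M = N + diagonal fun _ => -c := by
    rw [add_assoc, diagonal_add]; simp
  have hcomm : Commute N (diagonal fun _ => -c) := by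
    rw [← smul_one_eq_diagonal]
    exact (Commute.one_right N).smul_right _
  rw [hsplit, exp_add_of_commute _ _ hcomm, exp_diagonal, mul_diagonal]
  refine mul_nonneg (exp_apply_nonneg hN i j) ?_
  rw [Pi.exp_def, ← Real.exp_eq_exp_ℝ]
  exact (Real.exp_pos _).le

end Matrix

section BranchingGenerator

variable {V : Type*} [Fintype V] [DecidableEq V] (r : V → V → ℝ) (b : ℝ)

noncomputable def branchingGenerator : Matrix (V ⊕ V) (V ⊕ V) ℝ :=
  fromBlocks (of fun x w => if x = w then b - ∑ u, r x u else r x w) (of r) 0 0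

noncomputable def branchingWeight : V ⊕ V → ℝ :=
  Sum.elim 1 fun y => (∑ w, r y w) / b

variable {r b}

theorem branchingGenerator_apply_nonneg_of_ne (hr : ∀ x y, 0 ≤ r x y) {i j : V ⊕ V}
    (hij : i ≠ j) : 0 ≤ branchingGenerator r b i j := by
  rcases i with x | x <;> rcases j with w | w
  · have hxw : x ≠ w := fun h => hij (congrArg Sum.inl h)
    simpa [branchingGenerator, hxw] using hr x w
  · exact hr x w
  · exact le_rfl
  · exact le_rfl

theorem branchingWeight_vecMul_branchingGenerator (hsymm : ∀ x y, r x y = r y x)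
    (hdiag : ∀ x, r x x = 0) (hb : b ≠ 0) :
    branchingWeight r b ᵥ* branchingGenerator r b = b • branchingWeight r b := by
  have hcol : ∀ y, ∑ x, r x y = ∑ w, r y w := fun y => Finset.sum_congr rfl fun x _ => hsymm x y
  have hcolA1 : ∀ y, ∑ x, (if x = y then b - ∑ u, r x u else r x y) = b := by
    intro y
    have hsplit : ∀ x, (if x = y then b - ∑ u, r x u else r x y)
        = r x y + if x = y then b - ∑ w, r y w else 0 := by
      intro x
      split_ifs with hxy
      · subst hxy; rw [hdiag]; ring
      · ring
    simp only [hsplit, Finset.sum_add_distrib, Finset.sum_ite_eq', Finset.mem_univ, if_true, hcol]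
    ring
  ext (y | y)
  · simp [branchingGenerator, branchingWeight, vecMul, dotProduct, hcolA1]
  · simp [branchingGenerator, branchingWeight, vecMul, dotProduct, hcol]
    field_simp

end BranchingGenerator

theorem stmt_6_general {V : Type*} [Fintype V] [DecidableEq V]
    (r : V → V → ℝ) (hsymm : ∀ x y, r x y = r y x) (hnonneg : ∀ x y, 0 ≤ r x y)
    (hdiag : ∀ x, r x x = 0) (b M T : ℝ) (hb : 0 < b) (hM : 0 ≤ M) (hT : 0 ≤ T)
    (z : V ⊕ V → ℝ) (hzM : ∀ x : V, z (Sum.inl x) ≤ M)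
    (hzg : ∀ x : V, z (Sum.inr x) = 0) (K : Finset V) :
    let A1 : Matrix V V ℝ := fun x w => if x = w then b - ∑ u : V, r x u else r x w
    let A2 : Matrix V V ℝ := fun x w => r x w
    let A : Matrix (V ⊕ V) (V ⊕ V) ℝ :=
      Matrix.fromBlocks A1 A2 (0 : Matrix V V ℝ) (0 : Matrix V V ℝ)
    ∑ y ∈ K, (Matrix.vecMul z (NormedSpace.exp (T • A)) (Sum.inl y)
        + Matrix.vecMul z (NormedSpace.exp (T • A)) (Sum.inr y))
      ≤ M * Real.exp (b * T) * ∑ y ∈ K, (1 + (∑ w : V, r y w) / b) := by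
  intro A1 A2 A
  change ∑ y ∈ K, ((z ᵥ* exp (T • branchingGenerator r b)) (Sum.inl y)
      + (z ᵥ* exp (T • branchingGenerator r b)) (Sum.inr y)) ≤ _
  set E := exp (T • branchingGenerator r b)
  have hE : ∀ i j, 0 ≤ E i j := exp_apply_nonneg_of_offDiag_nonneg fun i j hij =>
    smul_nonneg hT (branchingGenerator_apply_nonneg_of_ne hnonneg hij)
  have hweight : branchingWeight r b ᵥ* E = Real.exp (b * T) • branchingWeight r b := by
    rw [Real.exp_eq_exp_ℝ]
    refine vecMul_exp_of_vecMul_eq_smul_s6 ?_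
    rw [vecMul_smul, branchingWeight_vecMul_branchingGenerator hsymm hdiag hb.ne', smul_smul,
      mul_comm]
  have hz : z ≤ M • branchingWeight r b := by
    rintro (x | x)
    · simpa [branchingWeight] using hzM x
    · simp only [hzg x, Pi.smul_apply, branchingWeight, Sum.elim_inr, smul_eq_mul]
      exact mul_nonneg hM (div_nonneg (Finset.sum_nonneg fun w _ => hnonneg x w) hb.le)
  have hzE (j : V ⊕ V) : (z ᵥ* E) j ≤ M * Real.exp (b * T) * branchingWeight r b j :=
    calc (z ᵥ* E) j ≤ ((M • branchingWeight r b) ᵥ* E) j :=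
          dotProduct_le_dotProduct_of_nonneg_right hz fun i => hE i j
      _ = _ := by rw [smul_vecMul, hweight, smul_smul]; rfl
  rw [Finset.mul_sum]
  refine Finset.sum_le_sum fun y _ => ?_
  simpa [branchingWeight, mul_add] using add_le_add (hzE (.inl y)) (hzE (.inr y))

/-- Matrix form of Lemma 2.2: if the row vector `z` has alive coordinates between `0` and
`M` and zero ghost coordinates, then for the generator `A = fromBlocks A1 A2 0 0` of the
first-moment semigroup of the branching process, the expected number of alive plus ghost
particles in `K` at time `T`, namely `∑_{y∈K} [(z ⬝ exp(TA))(inl y) + (z ⬝ exp(TA))(inr y)]`,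
is at most `M e^{bT} ∑_{y∈K} (1 + r(y)/b)`. -/
theorem stmt_6 {V : Type*} [Fintype V] [DecidableEq V] [Nonempty V]
    (r : V → V → ℝ) (hsymm : ∀ x y, r x y = r y x) (hnonneg : ∀ x y, 0 ≤ r x y)
    (hdiag : ∀ x, r x x = 0) (b M T : ℝ) (hb : 0 < b) (hM : 0 ≤ M) (hT : 0 ≤ T)
    (z : V ⊕ V → ℝ) (hz0 : ∀ x : V, 0 ≤ z (Sum.inl x)) (hzM : ∀ x : V, z (Sum.inl x) ≤ M)
    (hzg : ∀ x : V, z (Sum.inr x) = 0) (K : Finset V) :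
    let A1 : Matrix V V ℝ := fun x w => if x = w then b - ∑ u : V, r x u else r x w
    let A2 : Matrix V V ℝ := fun x w => r x w
    let A : Matrix (V ⊕ V) (V ⊕ V) ℝ :=
      Matrix.fromBlocks A1 A2 (0 : Matrix V V ℝ) (0 : Matrix V V ℝ)
    ∑ y ∈ K, (Matrix.vecMul z (NormedSpace.exp (T • A)) (Sum.inl y)
        + Matrix.vecMul z (NormedSpace.exp (T • A)) (Sum.inr y))
      ≤ M * Real.exp (b * T) * ∑ y ∈ K, (1 + (∑ w : V, r y w) / b) :=
  stmt_6_general r hsymm hnonneg hdiag b M T hb hM hT z hzM hzg K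
end

section
/- Let b > 0 and ℓ ≥ 1 a natural number, and on a probability space let X_1, …, X_ℓ be independent real random variables such that X_k has the exponential distribution of rate k·b (density k·b·e^{−k·b·s} on [0,∞)). Then for every θ > 0 and every T ≥ 0: ℙ( Σ_{k=1}^ℓ X_k ≤ T ) ≤ exp( θT − Σ_{k=1}^ℓ θ/(k·b + θ) ). -/
open MeasureTheory ProbabilityTheory

/-! Chernoff's bound `ℙ(S ≤ T) ≤ e^{θT} 𝔼 e^{-θS}` with `S = ∑ X_k`. By independence the
Laplace transform factorises, and `𝔼 e^{-θX} = r/(r+θ)` for `X ~ Exp(r)`, since tilting the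
density `r e^{-rx}` by `e^{-θx}` gives `r/(r+θ)` times the density of `Exp(r+θ)`. Finally
`r/(r+θ) = 1 - θ/(r+θ) ≤ e^{-θ/(r+θ)}`. -/

lemma exponentialPDF_mul_exp {r t : ℝ} (ht : t < r) (x : ℝ) :
    exponentialPDF r x * ENNReal.ofReal (Real.exp (t * x)) =
      ENNReal.ofReal (r / (r - t)) * exponentialPDF (r - t) x := by
  rcases lt_or_ge x 0 with hx | hx
  · simp only [exponentialPDF_of_neg hx, zero_mul, mul_zero]
  · have hrt : r - t ≠ 0 := (sub_pos.mpr ht).ne'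
    rw [exponentialPDF_of_nonneg hx, exponentialPDF_of_nonneg hx,
      ← ENNReal.ofReal_mul' (Real.exp_pos _).le, ← ENNReal.ofReal_mul' (by positivity)]
    congr 1
    rw [mul_assoc, ← Real.exp_add]
    field_simp
    ring_nf

section Exponential

variable {Ω : Type*} [MeasurableSpace Ω] {μ : Measure Ω} {X : Ω → ℝ} {r t : ℝ}

lemma lintegral_exp_mul_of_map_eq_exponential (hX : Measurable X)
    (hmap : μ.map X = volume.withDensity (exponentialPDF r)) (ht : t < r) :
    ∫⁻ ω, ENNReal.ofReal (Real.exp (t * X ω)) ∂μ = ENNReal.ofReal (r / (r - t)) := by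
  have hexp : Measurable fun x : ℝ ↦ ENNReal.ofReal (Real.exp (t * x)) := by fun_prop
  have hpdf : Measurable (exponentialPDF r) := (measurable_exponentialPDFReal r).ennreal_ofReal
  rw [← lintegral_map hexp hX, hmap, lintegral_withDensity_eq_lintegral_mul _ hpdf hexp]
  simp only [Pi.mul_apply, exponentialPDF_mul_exp ht]
  rw [lintegral_const_mul' _ _ ENNReal.ofReal_ne_top,
    lintegral_exponentialPDF_eq_one (sub_pos.mpr ht), mul_one]

lemma integrable_exp_mul_of_map_eq_exponential (hX : Measurable X)
    (hmap : μ.map X = volume.withDensity (exponentialPDF r)) (ht : t < r) :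
    Integrable (fun ω ↦ Real.exp (t * X ω)) μ := by
  refine (lintegral_ofReal_ne_top_iff_integrable (by fun_prop)
    (ae_of_all _ fun ω ↦ (Real.exp_pos _).le)).mp ?_
  rw [lintegral_exp_mul_of_map_eq_exponential hX hmap ht]
  exact ENNReal.ofReal_ne_top

lemma mgf_of_map_eq_exponential (hX : Measurable X)
    (hmap : μ.map X = volume.withDensity (exponentialPDF r)) (hr : 0 < r) (ht : t < r) :
    mgf X μ t = r / (r - t) := by
  rw [mgf, integral_eq_lintegral_of_nonneg_ae (ae_of_all _ fun ω ↦ (Real.exp_pos _).le)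
    (by fun_prop), lintegral_exp_mul_of_map_eq_exponential hX hmap ht,
    ENNReal.toReal_ofReal (div_nonneg hr.le (sub_pos.mpr ht).le)]

end Exponential

lemma div_add_le_exp_neg_div {r θ : ℝ} (h : 0 < r + θ) : r / (r + θ) ≤ Real.exp (-(θ / (r + θ))) :=
  calc r / (r + θ) = -(θ / (r + θ)) + 1 := by field_simp; ring
    _ ≤ Real.exp (-(θ / (r + θ))) := Real.add_one_le_exp _

theorem measureReal_sum_le_le_exp_of_exponential {Ω ι : Type*} [MeasurableSpace Ω] [Fintype ι]
    {μ : Measure Ω} [IsProbabilityMeasure μ] {X : ι → Ω → ℝ} {r : ι → ℝ}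
    (hX : ∀ i, Measurable (X i)) (hindep : iIndepFun X μ) (hr : ∀ i, 0 < r i)
    (hmap : ∀ i, μ.map (X i) = volume.withDensity (exponentialPDF (r i)))
    {θ : ℝ} (hθ : 0 ≤ θ) (T : ℝ) :
    μ.real {ω | ∑ i, X i ω ≤ T} ≤ Real.exp (θ * T - ∑ i, θ / (r i + θ)) := by
  have hlt : ∀ i, -θ < r i := fun i ↦ by linarith [hr i]
  have hint : Integrable (fun ω ↦ Real.exp (-θ * (∑ i, X i) ω)) μ :=
    hindep.integrable_exp_mul_sum hX fun i _ ↦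
      integrable_exp_mul_of_map_eq_exponential (hX i) (hmap i) (hlt i)
  have hmgf : mgf (∑ i, X i) μ (-θ) = ∏ i, r i / (r i + θ) := by
    rw [hindep.mgf_sum hX]
    refine Finset.prod_congr rfl fun i _ ↦ ?_
    rw [mgf_of_map_eq_exponential (hX i) (hmap i) (hr i) (hlt i), sub_neg_eq_add]
  calc μ.real {ω | ∑ i, X i ω ≤ T}
      = μ.real {ω | (∑ i, X i) ω ≤ T} := by simp only [Finset.sum_apply]
    _ ≤ Real.exp (-(-θ) * T) * mgf (∑ i, X i) μ (-θ) :=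
      measure_le_le_exp_mul_mgf T (neg_nonpos.mpr hθ) hint
    _ ≤ Real.exp (θ * T) * ∏ i, Real.exp (-(θ / (r i + θ))) := by
      rw [neg_neg, hmgf]
      gcongr with i
      · exact fun i _ ↦ div_nonneg (hr i).le (by linarith [hr i])
      · exact div_add_le_exp_neg_div (by linarith [hr i])
    _ = Real.exp (θ * T - ∑ i, θ / (r i + θ)) := by
      rw [← Real.exp_sum, ← Real.exp_add, Finset.sum_neg_distrib, sub_eq_add_neg]

theorem stmt_7_general {Ω : Type*} [MeasureSpace Ω] [IsProbabilityMeasure (ℙ : Measure Ω)]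
    (b : ℝ) (hb : 0 < b) (ℓ : ℕ)
    (X : Fin ℓ → Ω → ℝ) (hmeas : ∀ k, Measurable (X k))
    (hindep : iIndepFun X ℙ)
    (hdist : ∀ k : Fin ℓ,
      Measure.map (X k) ℙ = volume.withDensity (exponentialPDF (((k : ℕ) + 1) * b)))
    (θ T : ℝ) (hθ : 0 < θ) :
    ℙ {ω | ∑ k : Fin ℓ, X k ω ≤ T} ≤
      ENNReal.ofReal (Real.exp (θ * T - ∑ k : Fin ℓ, θ / (((k : ℕ) + 1) * b + θ))) :=
  (ENNReal.le_ofReal_iff_toReal_le (measure_ne_top _ _) (Real.exp_pos _).le).mpr <|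
    measureReal_sum_le_le_exp_of_exponential hmeas hindep (fun k ↦ by positivity) hdist hθ.le T

/-- Chernoff-type bound (inequality (5) in the proof of Proposition 2.3): if
`X_1, …, X_ℓ` are independent, `X_k` exponentially distributed with rate `k·b`, then
`ℙ(∑ X_k ≤ T) ≤ exp(θT − ∑_{k=1}^ℓ θ/(kb+θ))` for every `θ > 0` and `T ≥ 0`.
Here `X k` (for `k : Fin ℓ`) plays the role of `X_{k+1}`, with rate `(k+1)·b`, and the
exponential distribution of rate `μ` is the measure with density `μ e^{−μs} 1_{s≥0}`. -/
theorem stmt_7 {Ω : Type*} [MeasureSpace Ω] [IsProbabilityMeasure (ℙ : Measure Ω)]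
    (b : ℝ) (hb : 0 < b) (ℓ : ℕ) (hℓ : 1 ≤ ℓ)
    (X : Fin ℓ → Ω → ℝ) (hmeas : ∀ k, Measurable (X k))
    (hindep : iIndepFun X ℙ)
    (hdist : ∀ k : Fin ℓ,
      Measure.map (X k) ℙ = volume.withDensity (exponentialPDF (((k : ℕ) + 1) * b)))
    (θ T : ℝ) (hθ : 0 < θ) (hT : 0 ≤ T) :
    ℙ {ω | ∑ k : Fin ℓ, X k ω ≤ T} ≤
      ENNReal.ofReal (Real.exp (θ * T - ∑ k : Fin ℓ, θ / (((k : ℕ) + 1) * b + θ))) :=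
  stmt_7_general b hb ℓ X hmeas hindep hdist θ T hθ
end

section
/- Let n ≥ 1 and γ > 0, and let (N_z)_{z∈ℤ^n} be an i.i.d. family of random variables, each with the Poisson distribution of parameter γ. Then there exists a constant c > 0, depending only on γ and n, such that almost surely there is a (random) N̄ ∈ ℕ with: for every integer N ≥ N̄ and every z ∈ ℤ^n with ‖z‖_∞ ≤ N, one has N_z ≤ c · log N. -/
/-!
Chernoff's bound with `E[2^X] = e^γ` gives `P(N_z ≥ k) ≤ e^γ 2^{-k}`. Taking
`k(M) = ⌊c log M⌋ + 1` with `c = (n + 2) / log 2`, so that `2^{k(M)} ≥ M^{n+2}`, the union bound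
over the `(2M + 1)^n ≤ (3M)^n` cubes of the box of radius `M` gives a probability at most
`3^n e^γ / M²`, which is summable; Borel–Cantelli concludes.
-/

open MeasureTheory ProbabilityTheory Real Filter
open scoped NNReal ENNReal Nat

lemma lintegral_pow_poissonMeasure (r t : ℝ≥0) :
    ∫⁻ m, (t : ℝ≥0∞) ^ m ∂poissonMeasure r = ENNReal.ofReal (exp (r * (t - 1))) := by
  have hterm (m : ℕ) : (t : ℝ≥0∞) ^ m * poissonMeasure r {m}
      = ENNReal.ofReal (exp (-r) * ((r * t) ^ m / m !)) := by
    rw [poissonMeasure_singleton, ← ENNReal.ofReal_coe_nnreal,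
      ← ENNReal.ofReal_pow t.coe_nonneg, ← ENNReal.ofReal_mul (by positivity)]
    congr 1
    ring
  have hexp : ∑' m : ℕ, ((r * t : ℝ) ^ m / m !) = exp (r * t) := by
    rw [exp_eq_exp_ℝ, NormedSpace.exp_eq_tsum_div]
  rw [lintegral_countable', tsum_congr hterm, ← ENNReal.ofReal_tsum_of_nonneg
    (fun m => by positivity) ((Real.summable_pow_div_factorial _).mul_left _), tsum_mul_left,
    hexp, ← exp_add]
  ring_nf

lemma pow_mul_poissonMeasure_Ici_le (r : ℝ≥0) (k : ℕ) {t : ℝ≥0} (ht : 1 ≤ t) :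
    (t : ℝ≥0∞) ^ k * poissonMeasure r (Set.Ici k) ≤ ENNReal.ofReal (exp (r * (t - 1))) := by
  calc (t : ℝ≥0∞) ^ k * poissonMeasure r (Set.Ici k)
      ≤ (t : ℝ≥0∞) ^ k * poissonMeasure r {m | (t : ℝ≥0∞) ^ k ≤ (t : ℝ≥0∞) ^ m} := by
        refine mul_le_mul_right (measure_mono fun m (hm : k ≤ m) => ?_) _
        exact pow_le_pow_right₀ (ENNReal.one_le_coe_iff.mpr ht) hm
    _ ≤ ∫⁻ m, (t : ℝ≥0∞) ^ m ∂poissonMeasure r := mul_meas_ge_le_lintegral₀ .of_discrete _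
    _ = _ := lintegral_pow_poissonMeasure r t

lemma ae_eventually_forall_lt_of_tsum_ne_top {ι Ω α : Type*} [MeasurableSpace Ω] [LinearOrder α]
    {μ : Measure Ω} (X : ι → Ω → α) (B : ℕ → Finset ι) (k : ℕ → α)
    (h : ∑' M, ∑ z ∈ B M, μ {ω | k M ≤ X z ω} ≠ ∞) :
    ∀ᵐ ω ∂μ, ∀ᶠ M in atTop, ∀ z ∈ B M, X z ω < k M := by
  have hunion : ∑' M, μ (⋃ z ∈ B M, {ω | k M ≤ X z ω}) ≠ ∞ :=
    ne_top_of_le_ne_top h (ENNReal.tsum_le_tsum fun M => measure_biUnion_finset_le _ _)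
  filter_upwards [ae_eventually_notMem hunion] with ω hω
  filter_upwards [hω] with M hM z hz
  simp only [Set.mem_iUnion, Set.mem_ofPred_eq, not_exists] at hM
  exact lt_of_not_ge (hM z hz)

lemma pow_le_two_pow_floor_add_one {x : ℝ} (hx : 0 < x) (a : ℕ) :
    x ^ a ≤ 2 ^ (⌊a / log 2 * log x⌋₊ + 1) := by
  have hlog2 : 0 < log 2 := log_pos one_lt_two
  rw [← log_le_log_iff (by positivity) (by positivity), log_pow, log_pow]
  calc a * log x = a / log 2 * log x * log 2 := by field_simp
    _ ≤ _ := by gcongr; exact (Nat.lt_floor_add_one _).le.trans (by push_cast; rfl)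

lemma summable_pow_div_two_pow_floor_add_one (n : ℕ) :
    Summable fun M : ℕ => (2 * M + 1 : ℝ) ^ n / 2 ^ (⌊(n + 2 : ℕ) / log 2 * log M⌋₊ + 1) := by
  refine Summable.of_norm_bounded_eventually_nat
    ((summable_one_div_nat_pow.mpr one_lt_two).mul_left (3 ^ n)) ?_
  filter_upwards [eventually_ge_atTop 1] with M hM
  have hM : (1 : ℝ) ≤ M := by exact_mod_cast hM
  rw [Real.norm_of_nonneg (by positivity)]
  calc (2 * M + 1 : ℝ) ^ n / 2 ^ (⌊(n + 2 : ℕ) / log 2 * log M⌋₊ + 1)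
      ≤ (3 * M) ^ n / M ^ (n + 2) := by
        gcongr
        · linarith
        · exact pow_le_two_pow_floor_add_one (by positivity) _
    _ = 3 ^ n * (1 / M ^ 2) := by field_simp; ring

lemma card_piFinset_Icc_neg_self (n M : ℕ) :
    (Fintype.piFinset fun _ : Fin n => Finset.Icc (-(M : ℤ)) M).card = (2 * M + 1) ^ n := by
  simp only [Fintype.card_piFinset, Int.card_Icc, Finset.prod_const, Finset.card_univ,
    Fintype.card_fin]
  congr 1
  omega

lemma measure_ge_le_of_map_eq_poissonMeasure {Ω : Type*} [MeasurableSpace Ω] {μ : Measure Ω}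
    {X : Ω → ℕ} (hX : Measurable X) {r : ℝ≥0} (hlaw : μ.map X = poissonMeasure r) (k : ℕ) :
    μ {ω | k ≤ X ω} ≤ ENNReal.ofReal (exp r / 2 ^ k) := by
  have h : 2 ^ k * μ (X ⁻¹' Set.Ici k) ≤ ENNReal.ofReal (exp r) := by
    simpa [← hlaw, Measure.map_apply hX measurableSet_Ici, show (2 : ℝ) - 1 = 1 by norm_num] using
      pow_mul_poissonMeasure_Ici_le r k (t := 2) one_le_two
  rw [ENNReal.ofReal_div_of_pos (by positivity), ENNReal.ofReal_pow zero_le_two,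
    ENNReal.ofReal_ofNat, ENNReal.le_div_iff_mul_le (by simp) (by simp), mul_comm]
  exact h

theorem stmt_10_general (n : ℕ) (γ : NNReal)
    {Ω : Type*} [MeasureSpace Ω]
    (N : (Fin n → ℤ) → Ω → ℕ) (hmeas : ∀ z, Measurable (N z))
    (hdist : ∀ z, Measure.map (N z) ℙ = poissonMeasure γ) :
    ∃ c : ℝ, 0 < c ∧
      ∀ᵐ ω ∂ℙ, ∃ N₀ : ℕ, ∀ M : ℕ, N₀ ≤ M →
        ∀ z : Fin n → ℤ, (∀ i, |z i| ≤ (M : ℤ)) →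
          (N z ω : ℝ) ≤ c * Real.log M := by
  set c : ℝ := (n + 2 : ℕ) / log 2
  set k : ℕ → ℕ := fun M => ⌊c * log M⌋₊ + 1
  set box : ℕ → Finset (Fin n → ℤ) := fun M =>
    Fintype.piFinset fun _ => Finset.Icc (-(M : ℤ)) M
  have hsum : ∑' M, ∑ z ∈ box M, ℙ {ω | k M ≤ N z ω} ≠ ∞ := by
    have hbound (M : ℕ) : ∑ z ∈ box M, ℙ {ω | k M ≤ N z ω}
        ≤ ENNReal.ofReal (exp γ * ((2 * M + 1 : ℝ) ^ n / 2 ^ k M)) := by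
      calc ∑ z ∈ box M, ℙ {ω | k M ≤ N z ω}
          ≤ ∑ z ∈ box M, ENNReal.ofReal (exp γ / 2 ^ k M) := Finset.sum_le_sum fun z _ =>
            measure_ge_le_of_map_eq_poissonMeasure (hmeas z) (hdist z) (k M)
        _ = _ := by
          rw [Finset.sum_const, card_piFinset_Icc_neg_self, nsmul_eq_mul,
            ← ENNReal.ofReal_natCast, ← ENNReal.ofReal_mul (by positivity)]
          push_cast
          ring_nf
    refine ne_top_of_le_ne_top ?_ (ENNReal.tsum_le_tsum hbound)
    rw [← ENNReal.ofReal_tsum_of_nonneg (fun M => by positivity)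
      ((summable_pow_div_two_pow_floor_add_one n).mul_left _)]
    exact ENNReal.ofReal_ne_top
  refine ⟨c, by positivity, ?_⟩
  filter_upwards [ae_eventually_forall_lt_of_tsum_ne_top N box k hsum] with ω hω
  obtain ⟨N₀, hN₀⟩ := eventually_atTop.mp hω
  refine ⟨N₀, fun M hM z hz => ?_⟩
  have hzM : z ∈ box M :=
    Fintype.mem_piFinset.mpr fun i => Finset.mem_Icc.mpr (abs_le.mp (hz i))
  have hlt : N z ω < ⌊c * log M⌋₊ + 1 := hN₀ M hM z hzM
  exact (Nat.le_floor_iff (by positivity)).mp (Nat.lt_succ_iff.mp hlt)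

/-- Claim (ii) in the proof of Lemma 2.4: if `(N_z)_{z ∈ ℤ^n}` is an i.i.d. family of
Poisson(γ) random variables (the numbers of points of a Poisson point process of intensity
`γ` in the unit cubes `z + [0,1)^n`), then there is a constant `c > 0` depending only on
`γ` and `n` such that almost surely, for all large enough `N`, every `z` with
`‖z‖_∞ ≤ N` satisfies `N_z ≤ c log N`. -/
theorem stmt_10 (n : ℕ) (hn : 1 ≤ n) (γ : NNReal) (hγ : 0 < γ)
    {Ω : Type*} [MeasureSpace Ω] [IsProbabilityMeasure (ℙ : Measure Ω)]
    (N : (Fin n → ℤ) → Ω → ℕ) (hmeas : ∀ z, Measurable (N z))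
    (hindep : iIndepFun N ℙ)
    (hdist : ∀ z, Measure.map (N z) ℙ = poissonMeasure γ) :
    ∃ c : ℝ, 0 < c ∧
      ∀ᵐ ω ∂ℙ, ∃ N₀ : ℕ, ∀ M : ℕ, N₀ ≤ M →
        ∀ z : Fin n → ℤ, (∀ i, |z i| ≤ (M : ℤ)) →
          (N z ω : ℝ) ≤ c * Real.log M :=
  stmt_10_general n γ N hmeas hdist
end

section
/- Let n ≥ 2 and γ > 0, and let (M_N)_{N∈ℕ, N≥1} be a family of independent random variables where M_N has the Poisson distribution of parameter γ · 2^n · ((N+1)^n − N^n). Then there exists a constant c > 0, depending only on γ and n, such that almost surely there is a (random) N̄ ∈ ℕ with: M_N ≤ c · N^{n−1} for every integer N ≥ N̄. -/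
/-!
By the Chernoff bound with exponential moment `e^{k}`, a Poisson variable of mean `r` exceeds
`x` with probability at most `exp (r (e - 1) - x)`. Since `(N+1)^n - N^n ≤ n 2^{n-1} N^{n-1}`,
the mean of `M_N` is at most `K N^{n-1}` for a constant `K`, so with `c = K (e - 1) + 1` the
event `M_N > c N^{n-1}` has probability at most `exp (-N^{n-1}) ≤ exp (-N)`. These are summable,
and the first Borel–Cantelli lemma concludes.
-/

open MeasureTheory ProbabilityTheory Real Filter
open scoped NNReal ENNReal Nat

lemma add_one_pow_sub_pow_le {x : ℝ} (hx : 1 ≤ x) (n : ℕ) :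
    (x + 1) ^ n - x ^ n ≤ n * 2 ^ (n - 1) * x ^ (n - 1) :=
  calc (x + 1) ^ n - x ^ n ≤ |(x + 1) ^ n - x ^ n| := le_abs_self _
    _ ≤ |x + 1 - x| * n * max |x + 1| |x| ^ (n - 1) := abs_pow_sub_pow_le _ _ _
    _ = n * (x + 1) ^ (n - 1) := by
      rw [add_sub_cancel_left, abs_one, abs_of_nonneg (by linarith), abs_of_nonneg (by linarith),
        max_eq_left (by linarith), one_mul]
    _ ≤ n * (2 * x) ^ (n - 1) := by gcongr; linarith
    _ = n * 2 ^ (n - 1) * x ^ (n - 1) := by rw [mul_pow, mul_assoc]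

lemma crown_rate_le (γ : ℝ≥0) {n N : ℕ} (hN : 1 ≤ N) :
    ((γ * 2 ^ n * (((N + 1) ^ n - N ^ n : ℕ) : ℝ≥0) : ℝ≥0) : ℝ) ≤
      γ * 2 ^ n * (n * 2 ^ (n - 1)) * N ^ (n - 1) := by
  rw [NNReal.coe_mul, NNReal.coe_natCast, Nat.cast_sub (Nat.pow_le_pow_left N.le_succ n)]
  push_cast
  rw [mul_assoc _ (n * _ : ℝ)]
  gcongr
  exact add_one_pow_sub_pow_le (by exact_mod_cast hN) n

namespace ProbabilityTheory

lemma lintegral_poissonMeasure (r : ℝ≥0) (f : ℕ → ℝ≥0∞) :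
    ∫⁻ k, f k ∂poissonMeasure r = ∑' k, ENNReal.ofReal (exp (-r) * r ^ k / k !) * f k := by
  simp [poissonMeasure, lintegral_sum_measure, lintegral_dirac]

lemma lintegral_exp_mul_poissonMeasure (r : ℝ≥0) (θ : ℝ) :
    ∫⁻ k, ENNReal.ofReal (exp (θ * k)) ∂poissonMeasure r =
      ENNReal.ofReal (exp (r * (exp θ - 1))) := by
  have hterm (k : ℕ) :
      exp (-r) * r ^ k / k ! * exp (θ * k) = exp (-r) * ((r * exp θ) ^ k / k !) := by
    rw [mul_pow, ← exp_nat_mul]; ring_nf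
  have hsum : HasSum (fun k : ℕ ↦ exp (-r) * r ^ k / k ! * exp (θ * k))
      (exp (r * (exp θ - 1))) := by
    simp_rw [hterm]
    have h := (NormedSpace.expSeries_div_hasSum_exp ((r : ℝ) * exp θ)).mul_left (exp (-r))
    rw [← exp_eq_exp_ℝ, ← exp_add] at h
    rwa [show (r : ℝ) * (exp θ - 1) = -r + r * exp θ by ring]
  rw [lintegral_poissonMeasure, ← hsum.tsum_eq,
    ENNReal.ofReal_tsum_of_nonneg (fun k ↦ by positivity) hsum.summable]
  congr 1 with k
  rw [ENNReal.ofReal_mul (by positivity)]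

lemma poissonMeasure_setOf_ge_le (r : ℝ≥0) {θ : ℝ} (hθ : 0 ≤ θ) (x : ℝ) :
    poissonMeasure r {k | x ≤ k} ≤ ENNReal.ofReal (exp (r * (exp θ - 1) - θ * x)) :=
  calc poissonMeasure r {k | x ≤ k}
      ≤ poissonMeasure r
          {k | ENNReal.ofReal (exp (θ * x)) ≤ ENNReal.ofReal (exp (θ * k))} :=
        measure_mono fun k hk ↦
          ENNReal.ofReal_le_ofReal (exp_le_exp.2 (mul_le_mul_of_nonneg_left hk hθ))
    _ ≤ (∫⁻ k, ENNReal.ofReal (exp (θ * k)) ∂poissonMeasure r) /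
          ENNReal.ofReal (exp (θ * x)) :=
        meas_ge_le_lintegral_div Measurable.of_discrete.aemeasurable
          (by simp [exp_pos]) ENNReal.ofReal_ne_top
    _ = ENNReal.ofReal (exp (r * (exp θ - 1) - θ * x)) := by
      rw [lintegral_exp_mul_poissonMeasure, ← ENNReal.ofReal_div_of_pos (exp_pos _), ← exp_sub]

lemma measure_setOf_ge_le_exp_neg {Ω : Type*} [MeasurableSpace Ω] {μ : Measure Ω}
    {X : Ω → ℕ} (hX : Measurable X) {r : ℝ≥0} (hlaw : μ.map X = poissonMeasure r)
    {K y : ℝ} (hr : r ≤ K * y) :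
    μ {ω | (K * (exp 1 - 1) + 1) * y ≤ X ω} ≤ ENNReal.ofReal (exp (-y)) := by
  change μ (X ⁻¹' {k : ℕ | _ ≤ (k : ℝ)}) ≤ _
  rw [← Measure.map_apply hX .of_discrete, hlaw]
  refine (poissonMeasure_setOf_ge_le r zero_le_one _).trans
    (ENNReal.ofReal_le_ofReal (exp_le_exp.2 ?_))
  have he : 0 < exp 1 - 1 := by linarith [add_one_lt_exp one_ne_zero]
  nlinarith

end ProbabilityTheory

theorem stmt_11_general (n : ℕ) (hn : 2 ≤ n) (γ : NNReal)
    {Ω : Type*} [MeasureSpace Ω] [IsProbabilityMeasure (ℙ : Measure Ω)]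
    (M : ℕ → Ω → ℕ) (hmeas : ∀ N, Measurable (M N))
    (hdist : ∀ N : ℕ, 1 ≤ N →
      Measure.map (M N) ℙ =
        poissonMeasure (γ * 2 ^ n * (((N + 1) ^ n - N ^ n : ℕ) : NNReal))) :
    ∃ c : ℝ, 0 < c ∧
      ∀ᵐ ω ∂ℙ, ∃ N₀ : ℕ, ∀ N : ℕ, N₀ ≤ N →
        (M N ω : ℝ) ≤ c * (N : ℝ) ^ (n - 1) := by
  set c : ℝ := γ * 2 ^ n * (n * 2 ^ (n - 1)) * (exp 1 - 1) + 1
  have hc : 0 < c := by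
    have : 0 ≤ exp 1 - 1 := by linarith [add_one_le_exp 1]
    positivity
  have htail (N : ℕ) : ℙ {ω | c * N ^ (n - 1) < M N ω} ≤ ENNReal.ofReal (exp (-N)) := by
    rcases Nat.eq_zero_or_pos N with rfl | hN
    · simpa using prob_le_one -- `M 0` has no prescribed law, but the bound is `exp 0 = 1`
    calc ℙ {ω | c * N ^ (n - 1) < M N ω}
        ≤ ℙ {ω | c * N ^ (n - 1) ≤ M N ω} :=
          measure_mono (Set.ofPred_subset_ofPred.2 fun _ ↦ le_of_lt)
      _ ≤ ENNReal.ofReal (exp (-(N ^ (n - 1) : ℝ))) :=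
        measure_setOf_ge_le_exp_neg (hmeas N) (hdist N hN) (crown_rate_le γ hN)
      _ ≤ ENNReal.ofReal (exp (-N)) := by
        gcongr
        exact le_self_pow₀ (by exact_mod_cast hN) (by omega)
  have hsum : ∑' N : ℕ, ℙ {ω | c * N ^ (n - 1) < M N ω} ≠ ∞ :=
    ne_top_of_le_ne_top (by
      rw [← ENNReal.ofReal_tsum_of_nonneg (fun _ ↦ (exp_pos _).le) summable_exp_neg_nat]
      exact ENNReal.ofReal_ne_top) (ENNReal.tsum_le_tsum htail)
  refine ⟨c, hc, ?_⟩
  filter_upwards [ae_eventually_notMem hsum] with ω hω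
  obtain ⟨N₀, hN₀⟩ := hω.exists_forall_of_atTop
  exact ⟨N₀, fun N hN ↦ not_lt.1 (hN₀ N hN)⟩

/-- Claim (i) in the proof of Lemma 2.4: if `(M_N)_{N ≥ 1}` are independent random
variables with `M_N` Poisson-distributed with parameter `γ · 2^n · ((N+1)^n − N^n)`
(the mean number of points of a Poisson point process of intensity `γ` in the square
crown `C_N = B_{N+1} \ B_N`, `B_r = [−r,r]^n`), then there is a constant `c > 0`
depending only on `γ` and `n` such that almost surely `M_N ≤ c N^{n−1}` for all large
enough `N`. -/
theorem stmt_11 (n : ℕ) (hn : 2 ≤ n) (γ : NNReal) (hγ : 0 < γ)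
    {Ω : Type*} [MeasureSpace Ω] [IsProbabilityMeasure (ℙ : Measure Ω)]
    (M : ℕ → Ω → ℕ) (hmeas : ∀ N, Measurable (M N))
    (hindep : iIndepFun (fun N : {k : ℕ // 1 ≤ k} => M (N : ℕ)) ℙ)
    (hdist : ∀ N : ℕ, 1 ≤ N →
      Measure.map (M N) ℙ =
        poissonMeasure (γ * 2 ^ n * (((N + 1) ^ n - N ^ n : ℕ) : NNReal))) :
    ∃ c : ℝ, 0 < c ∧
      ∀ᵐ ω ∂ℙ, ∃ N₀ : ℕ, ∀ N : ℕ, N₀ ≤ N →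
        (M N ω : ℝ) ≤ c * (N : ℝ) ^ (n - 1) :=
  stmt_11_general n hn γ M hmeas hdist
end

section
/- Let n ≥ 1 and c₁, c₂ > 0. There exists a constant C > 0 depending only on n, c₁, c₂ such that the following holds for every integer N ≥ 2 and every set V ⊆ ℝ^n satisfying: (a) for every z ∈ ℤ^n whose unit cube z + [0,1)^n meets B_{2N}, the set V ∩ (z + [0,1)^n) is finite with at most c₂·log N elements; (b) for every integer k ≥ 2N, the set V ∩ (B_{k+1} \ B_k) is finite with at most c₁·k^{n−1} elements. Then for every x ∈ B_N the sum Σ_{y ∈ V, y ≠ x} e^{−‖x−y‖} converges and is at most C·log N, where ‖·‖ is the Euclidean norm on ℝ^n. -/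
open scoped BigOperators

/-- The box `B_r = [−r,r]^n ⊆ ℝ^n`. -/
def stmtBox (n : ℕ) (r : ℝ) : Set (EuclideanSpace ℝ (Fin n)) :=
  {x | ∀ i, |x i| ≤ r}

/-- The unit cube `z + [0,1)^n ⊆ ℝ^n` based at `z ∈ ℤ^n`. -/
def stmtCube (n : ℕ) (z : Fin n → ℤ) : Set (EuclideanSpace ℝ (Fin n)) :=
  {x | ∀ i, (z i : ℝ) ≤ x i ∧ x i < (z i : ℝ) + 1}

private lemma coordAbs_le_norm {n : ℕ} (v : EuclideanSpace ℝ (Fin n)) (i : Fin n) :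
    |v i| ≤ ‖v‖ := by
  rw [EuclideanSpace.norm_eq, ← Real.sqrt_sq_eq_abs]
  apply Real.sqrt_le_sqrt
  calc v i ^ 2 = ‖v i‖ ^ 2 := by rw [Real.norm_eq_abs, sq_abs]
    _ ≤ ∑ j, ‖v j‖ ^ 2 := Finset.single_le_sum (f := fun j => ‖v j‖ ^ 2)
        (fun j _ => sq_nonneg _) (Finset.mem_univ i)

private lemma sum_fiber_le {α β : Type*} [DecidableEq β] (s : Finset α) (g : α → β)
    (f : α → ℝ) (K t : β → ℝ) (ht : ∀ b, 0 ≤ t b)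
    (hcard : ∀ b ∈ s.image g, (((s.filter (fun a => g a = b)).card : ℝ)) ≤ K b)
    (hf : ∀ a ∈ s, f a ≤ t (g a)) :
    ∑ a ∈ s, f a ≤ ∑ b ∈ s.image g, K b * t b := by
  rw [← Finset.sum_fiberwise_of_maps_to (fun a ha => Finset.mem_image_of_mem g ha) f]
  refine Finset.sum_le_sum fun b hb => ?_
  calc ∑ a ∈ s.filter (fun a => g a = b), f a
      ≤ ∑ _a ∈ s.filter (fun a => g a = b), t b := by
        refine Finset.sum_le_sum fun a ha => ?_
        obtain ⟨has, hgab⟩ := Finset.mem_filter.1 ha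
        simpa [hgab] using hf a has
    _ = ((s.filter (fun a => g a = b)).card : ℝ) * t b := by
        rw [Finset.sum_const, nsmul_eq_mul]
    _ ≤ K b * t b := mul_le_mul_of_nonneg_right (hcard b hb) (ht b)

/-- The deterministic core of Lemma 2.4: if every unit cube meeting `B_{2N}` contains at
most `c₂ log N` points of `V` and every square crown `B_{k+1} \ B_k` with `k ≥ 2N`
contains at most `c₁ k^{n−1}` points of `V`, then for every `x ∈ B_N` the total jump rate
`r(x) = ∑_{y ∈ V, y ≠ x} e^{−‖x−y‖}` converges and is at most `C log N`, where `C`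
depends only on `n, c₁, c₂`. -/
theorem stmt_12 (n : ℕ) (hn : 1 ≤ n) (c₁ c₂ : ℝ) (hc₁ : 0 < c₁) (hc₂ : 0 < c₂) :
    ∃ C : ℝ, 0 < C ∧
      ∀ N : ℕ, 2 ≤ N →
      ∀ V : Set (EuclideanSpace ℝ (Fin n)),
      (∀ z : Fin n → ℤ, (stmtCube n z ∩ stmtBox n (2 * N)).Nonempty →
        (V ∩ stmtCube n z).Finite ∧
        ((V ∩ stmtCube n z).ncard : ℝ) ≤ c₂ * Real.log N) →
      (∀ k : ℕ, 2 * N ≤ k →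
        (V ∩ (stmtBox n (k + 1) \ stmtBox n k)).Finite ∧
        ((V ∩ (stmtBox n (k + 1) \ stmtBox n k)).ncard : ℝ) ≤ c₁ * (k : ℝ) ^ (n - 1)) →
      ∀ x : EuclideanSpace ℝ (Fin n), x ∈ stmtBox n N →
        Summable (fun y : ↥(V \ {x}) =>
          Real.exp (-‖x - (y : EuclideanSpace ℝ (Fin n))‖)) ∧
        (∑' y : ↥(V \ {x}), Real.exp (-‖x - (y : EuclideanSpace ℝ (Fin n))‖))
          ≤ C * Real.log N := by
  classical
  haveI : Nonempty (Fin n) := Fin.pos_iff_nonempty.1 hn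
  -- summable geometric-type series and their sums
  have hexp1lt : ‖Real.exp (-1)‖ < 1 := by
    rw [Real.norm_eq_abs, abs_of_pos (Real.exp_pos _)]
    exact Real.exp_lt_one_iff.2 (by norm_num)
  have hexphalf : ‖Real.exp (-(1/2 : ℝ))‖ < 1 := by
    rw [Real.norm_eq_abs, abs_of_pos (Real.exp_pos _)]
    exact Real.exp_lt_one_iff.2 (by norm_num)
  have hF₁ : Summable (fun j : ℕ => ((j : ℝ) + 1) ^ n * Real.exp (-1) ^ (j + 1)) := by
    have h0 : Summable (fun j : ℕ => (j : ℝ) ^ n * Real.exp (-1) ^ j) :=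
      summable_pow_mul_geometric_of_norm_lt_one n hexp1lt
    have h1 := (summable_nat_add_iff 1).2 h0
    exact h1.congr fun j => by push_cast; ring
  have hF₂ : Summable (fun k : ℕ => (k : ℝ) ^ (n - 1) * Real.exp (-(1/2 : ℝ)) ^ k) :=
    summable_pow_mul_geometric_of_norm_lt_one (n - 1) hexphalf
  set S₁ : ℝ := ∑' j : ℕ, ((j : ℝ) + 1) ^ n * Real.exp (-1) ^ (j + 1) with hS₁def
  set S₂ : ℝ := ∑' k : ℕ, (k : ℝ) ^ (n - 1) * Real.exp (-(1/2 : ℝ)) ^ k with hS₂def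
  have hS₁pos : 0 < S₁ := Summable.tsum_pos hF₁ (fun j => by positivity) 0 (by positivity)
  have hS₂nonneg : 0 ≤ S₂ := tsum_nonneg (fun k => by positivity)
  have hlog2 : 0 < Real.log 2 := Real.log_pos (by norm_num)
  refine ⟨c₂ * Real.exp (1/2) * ((6 : ℝ) ^ n * Real.exp 1) * S₁ + c₁ * S₂ / Real.log 2,
    ?_, ?_⟩
  · have hpos : 0 < c₂ * Real.exp (1/2) * ((6 : ℝ) ^ n * Real.exp 1) * S₁ :=
      mul_pos (mul_pos (mul_pos hc₂ (Real.exp_pos _))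
        (mul_pos (pow_pos (by norm_num) n) (Real.exp_pos _))) hS₁pos
    have h2 : 0 ≤ c₁ * S₂ / Real.log 2 :=
      div_nonneg (mul_nonneg hc₁.le hS₂nonneg) hlog2.le
    linarith
  intro N hN V h1 h2 x hx
  have hlogN : Real.log 2 ≤ Real.log N :=
    Real.log_le_log (by norm_num) (by exact_mod_cast hN)
  have hlogNpos : 0 < Real.log N := lt_of_lt_of_le hlog2 hlogN
  have hc₂logN : 0 ≤ c₂ * Real.log N := mul_nonneg hc₂.le hlogNpos.le
  set f : EuclideanSpace ℝ (Fin n) → ℝ := fun y => Real.exp (-‖x - y‖) with hfdef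
  -- the sup norm
  set supn : EuclideanSpace ℝ (Fin n) → ℝ := fun y => Finset.univ.sup' Finset.univ_nonempty (fun i => |y i|)
    with hsupndef
  have hsupn_le : ∀ (y : EuclideanSpace ℝ (Fin n)) i, |y i| ≤ supn y := fun y i => by
    simp only [hsupndef]
    exact Finset.le_sup' (fun i => |y i|) (Finset.mem_univ i)
  have hsupn_ex : ∀ y : EuclideanSpace ℝ (Fin n), ∃ i, supn y = |y i| := fun y => by
    simp only [hsupndef]
    obtain ⟨i, -, h⟩ := Finset.exists_mem_eq_sup' Finset.univ_nonempty (fun i => |(y : EuclideanSpace ℝ (Fin n)) i|)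
    exact ⟨i, h⟩
  -- the center distance for a cube
  set M : (Fin n → ℤ) → ℝ :=
    fun z => Finset.univ.sup' Finset.univ_nonempty (fun i => |x i - ((z i : ℝ) + 1/2)|)
    with hMdef
  have hMle : ∀ z i, |x i - ((z i : ℝ) + 1/2)| ≤ M z := fun z i => by
    simp only [hMdef]
    exact Finset.le_sup' (fun i => |x i - ((z i : ℝ) + 1/2)|) (Finset.mem_univ i)
  have hMex : ∀ z, ∃ i, M z = |x i - ((z i : ℝ) + 1/2)| := fun z => by
    simp only [hMdef]
    obtain ⟨i, -, h⟩ := Finset.exists_mem_eq_sup' Finset.univ_nonempty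
      (fun i => |x i - ((z i : ℝ) + 1/2)|)
    exact ⟨i, h⟩
  have hM0 : ∀ z, 0 ≤ M z := fun z =>
    le_trans (abs_nonneg _) (hMle z (Classical.arbitrary _))
  -- the main finite-sum bound
  have main : ∀ s : Finset (EuclideanSpace ℝ (Fin n)), (↑s : Set (EuclideanSpace ℝ (Fin n))) ⊆ V →
      ∑ y ∈ s, f y ≤
        (c₂ * Real.log N * Real.exp (1/2) * ((6 : ℝ) ^ n * Real.exp 1)) * S₁ + c₁ * S₂ := by
    intro s hsV
    set s1 := s.filter (fun y => y ∈ stmtBox n (2 * (N : ℝ))) with hs1def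
    set s2 := s.filter (fun y => ¬ y ∈ stmtBox n (2 * (N : ℝ))) with hs2def
    have hsplit : ∑ y ∈ s, f y = ∑ y ∈ s1, f y + ∑ y ∈ s2, f y :=
      (Finset.sum_filter_add_sum_filter_not s _ f).symm
    -- Part 2 : the crowns
    set gk : EuclideanSpace ℝ (Fin n) → ℕ := fun y => (⌈supn y⌉ - 1).toNat with hgkdef
    have hy_sup : ∀ y ∈ s2, 2 * (N : ℝ) < supn y := by
      intro y hy
      have hnb := (Finset.mem_filter.1 hy).2
      simp only [stmtBox, Set.mem_setOf_eq, not_forall, not_le] at hnb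
      obtain ⟨i, hi⟩ := hnb
      exact lt_of_lt_of_le hi (hsupn_le y i)
    have hk_facts : ∀ y : EuclideanSpace ℝ (Fin n), 2 * (N : ℝ) < supn y →
        2 * N ≤ gk y ∧ ((gk y : ℝ) < supn y) ∧ supn y ≤ (gk y : ℝ) + 1 := by
      intro y hy
      have hge : (2 * N : ℤ) + 1 ≤ ⌈supn y⌉ := by
        have : ((2 * N : ℤ) : ℝ) < supn y := by push_cast; exact hy
        exact Int.add_one_le_iff.2 (Int.lt_ceil.2 this)
      have hnn : (0 : ℤ) ≤ ⌈supn y⌉ - 1 := by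
        have : (0 : ℤ) ≤ 2 * N := by positivity
        omega
      have hcast : (gk y : ℤ) = ⌈supn y⌉ - 1 := Int.toNat_of_nonneg hnn
      refine ⟨?_, ?_, ?_⟩
      · have : (2 * N : ℤ) ≤ (gk y : ℤ) := by omega
        exact_mod_cast this
      · have h6 : ((⌈supn y⌉ : ℤ) : ℝ) < supn y + 1 := Int.ceil_lt_add_one _
        have h7 : ((gk y : ℤ) : ℝ) = ((⌈supn y⌉ : ℤ) : ℝ) - 1 := by exact_mod_cast hcast
        push_cast at h7 ⊢
        linarith
      · have h6 : supn y ≤ ((⌈supn y⌉ : ℤ) : ℝ) := Int.le_ceil _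
        have h7 : ((gk y : ℤ) : ℝ) = ((⌈supn y⌉ : ℤ) : ℝ) - 1 := by exact_mod_cast hcast
        push_cast at h7 ⊢
        linarith
    have part2 : ∑ y ∈ s2, f y ≤ c₁ * S₂ := by
      have hb := sum_fiber_le s2 gk f (fun k => c₁ * (k : ℝ) ^ (n - 1))
          (fun k => Real.exp (-(1/2 : ℝ)) ^ k) (fun k => by positivity) ?_ ?_
      · refine hb.trans ?_
        calc ∑ k ∈ s2.image gk, (c₁ * (k : ℝ) ^ (n - 1)) * Real.exp (-(1/2 : ℝ)) ^ k
            = c₁ * ∑ k ∈ s2.image gk, (k : ℝ) ^ (n - 1) * Real.exp (-(1/2 : ℝ)) ^ k := by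
              rw [Finset.mul_sum]
              exact Finset.sum_congr rfl fun k _ => by ring
          _ ≤ c₁ * S₂ := by
              refine mul_le_mul_of_nonneg_left ?_ hc₁.le
              exact Summable.sum_le_tsum _ (fun k _ => by positivity) hF₂
      · -- card bound on crowns
        intro k hk
        obtain ⟨y₀, hy₀, hy₀k⟩ := Finset.mem_image.1 hk
        have h2N : 2 * N ≤ k := hy₀k ▸ (hk_facts y₀ (hy_sup y₀ hy₀)).1
        obtain ⟨hfin, hcnt⟩ := h2 k h2N
        have hsub : (↑(s2.filter (fun a => gk a = k)) : Set (EuclideanSpace ℝ (Fin n))) ⊆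
            V ∩ (stmtBox n ((k : ℝ) + 1) \ stmtBox n (k : ℝ)) := by
          intro a ha
          rw [Finset.mem_coe, Finset.mem_filter] at ha
          obtain ⟨has2, hak⟩ := ha
          have hasup := hy_sup a has2
          obtain ⟨-, hlt, hle⟩ := hk_facts a hasup
          rw [hak] at hlt hle
          refine ⟨hsV (Finset.mem_coe.2 (Finset.filter_subset _ s has2)), ?_, ?_⟩
          · intro i
            exact le_trans (hsupn_le a i) hle
          · intro hmem
            obtain ⟨i, hi⟩ := hsupn_ex a
            have := hmem i
            rw [← hi] at this
            linarith
        calc (((s2.filter (fun a => gk a = k)).card : ℝ))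
            = ((↑(s2.filter (fun a => gk a = k)) : Set (EuclideanSpace ℝ (Fin n))).ncard : ℝ) := by
              rw [Set.ncard_coe_finset]
          _ ≤ ((V ∩ (stmtBox n ((k : ℝ) + 1) \ stmtBox n (k : ℝ))).ncard : ℝ) := by
              exact_mod_cast Set.ncard_le_ncard hsub hfin
          _ ≤ c₁ * (k : ℝ) ^ (n - 1) := hcnt
      · -- term bound on crowns
        intro y hy
        have hasup := hy_sup y hy
        obtain ⟨h2Nk, hlt, -⟩ := hk_facts y hasup
        obtain ⟨i, hi⟩ := hsupn_ex y
        have hyi : (gk y : ℝ) < |y i| := hi ▸ hlt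
        have hxi : |x i| ≤ (N : ℝ) := hx i
        have habs : |y i| - |x i| ≤ |x i - y i| := by
          have := abs_sub_abs_le_abs_sub (y i) (x i)
          rw [abs_sub_comm] at this
          exact this
        have hcoord := coordAbs_le_norm (x - y) i
        have hsubi : (x - y) i = x i - y i := rfl
        rw [hsubi] at hcoord
        have h2Nr : 2 * (N : ℝ) ≤ (gk y : ℝ) := by exact_mod_cast h2Nk
        have hnorm : (gk y : ℝ) * (1/2) ≤ ‖x - y‖ := by linarith
        calc f y ≤ Real.exp (-((gk y : ℝ) * (1/2))) := Real.exp_le_exp.2 (by linarith)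
          _ = Real.exp (-(1/2 : ℝ)) ^ (gk y) := by
              rw [← Real.exp_nat_mul]
              congr 1
              ring
    -- Part 1 : inside B_{2N}
    set zf : EuclideanSpace ℝ (Fin n) → (Fin n → ℤ) := fun y i => ⌊y i⌋ with hzfdef
    have part1 : ∑ y ∈ s1, f y ≤
        (c₂ * Real.log N * Real.exp (1/2) * ((6 : ℝ) ^ n * Real.exp 1)) * S₁ := by
      have step1 : ∑ y ∈ s1, f y ≤
          ∑ z ∈ s1.image zf, (c₂ * Real.log N) * (Real.exp (1/2) * Real.exp (-(M z))) := by
        refine sum_fiber_le s1 zf f (fun _ => c₂ * Real.log N)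
          (fun z => Real.exp (1/2) * Real.exp (-(M z))) (fun z => by positivity) ?_ ?_
        · intro z hz
          obtain ⟨y₀, hy₀, hy₀z⟩ := Finset.mem_image.1 hz
          have hy₀cube : y₀ ∈ stmtCube n z := by
            intro i
            rw [← hy₀z]
            exact ⟨Int.floor_le _, Int.lt_floor_add_one _⟩
          have hy₀box : y₀ ∈ stmtBox n (2 * (N : ℝ)) := (Finset.mem_filter.1 hy₀).2
          obtain ⟨hfin, hcnt⟩ := h1 z ⟨y₀, hy₀cube, hy₀box⟩
          have hsub : (↑(s1.filter (fun a => zf a = z)) : Set (EuclideanSpace ℝ (Fin n))) ⊆ V ∩ stmtCube n z := by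
            intro a ha
            rw [Finset.mem_coe, Finset.mem_filter] at ha
            obtain ⟨has1, haz⟩ := ha
            refine ⟨hsV (Finset.mem_coe.2 (Finset.filter_subset _ s has1)), ?_⟩
            intro i
            rw [← haz]
            exact ⟨Int.floor_le _, Int.lt_floor_add_one _⟩
          calc (((s1.filter (fun a => zf a = z)).card : ℝ))
              = ((↑(s1.filter (fun a => zf a = z)) : Set (EuclideanSpace ℝ (Fin n))).ncard : ℝ) := by
                rw [Set.ncard_coe_finset]
            _ ≤ ((V ∩ stmtCube n z).ncard : ℝ) := by
                exact_mod_cast Set.ncard_le_ncard hsub hfin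
            _ ≤ c₂ * Real.log N := hcnt
        · intro y _
          obtain ⟨i, hiM⟩ := hMex (zf y)
          have hfl1 : ((zf y i : ℝ)) ≤ y i := Int.floor_le _
          have hfl2 : y i < (zf y i : ℝ) + 1 := Int.lt_floor_add_one _
          have h3 : |y i - ((zf y i : ℝ) + 1/2)| ≤ 1/2 :=
            abs_le.2 ⟨by linarith, by linarith⟩
          have h4 := abs_sub_le (x i) (y i) ((zf y i : ℝ) + 1/2)
          have hcoord := coordAbs_le_norm (x - y) i
          have hsubi : (x - y) i = x i - y i := rfl
          rw [hsubi] at hcoord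
          have habs : M (zf y) - 1/2 ≤ |x i - y i| := by
            rw [hiM]; linarith
          calc f y ≤ Real.exp (-(M (zf y) - 1/2)) :=
              Real.exp_le_exp.2 (by linarith [le_abs_self (x i - y i)])
            _ = Real.exp (1/2) * Real.exp (-(M (zf y))) := by
                rw [← Real.exp_add]; congr 1; ring
      have step2 : ∑ z ∈ s1.image zf,
          (c₂ * Real.log N) * (Real.exp (1/2) * Real.exp (-(M z))) ≤
          ∑ j ∈ (s1.image zf).image (fun z => ⌊M z⌋₊),
            (((2 * j + 4) ^ n : ℕ) : ℝ) *
              ((c₂ * Real.log N) * Real.exp (1/2) * Real.exp (-(j : ℝ))) := by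
        refine sum_fiber_le (s1.image zf) (fun z => ⌊M z⌋₊) _
          (fun j => (((2 * j + 4) ^ n : ℕ) : ℝ))
          (fun j => (c₂ * Real.log N) * Real.exp (1/2) * Real.exp (-(j : ℝ)))
          (fun j => by positivity) ?_ ?_
        · -- counting cubes at distance about j
          intro j hj
          have hsubP : (s1.image zf).filter (fun z => ⌊M z⌋₊ = j) ⊆
              Fintype.piFinset (fun i => Finset.Icc (⌈x i⌉ - ((j : ℤ) + 2)) (⌈x i⌉ + ((j : ℤ) + 1))) := by
            intro z hz
            obtain ⟨-, hfl⟩ := Finset.mem_filter.1 hz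
            have hMlt : M z < (j : ℝ) + 1 := by
              have h5 := Nat.lt_floor_add_one (M z)
              rw [hfl] at h5
              exact_mod_cast h5
            rw [Fintype.mem_piFinset]
            intro i
            obtain ⟨hlo, hhi⟩ := abs_lt.1 (lt_of_le_of_lt (hMle z i) hMlt)
            rw [Finset.mem_Icc]
            constructor
            · by_contra hcon
              push_neg at hcon
              have h5 : z i + 1 ≤ ⌈x i⌉ - ((j : ℤ) + 2) := Int.add_one_le_iff.2 hcon
              have h5' : (z i : ℝ) + 1 ≤ (⌈x i⌉ : ℝ) - ((j : ℝ) + 2) := by exact_mod_cast h5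
              have h6 : (⌈x i⌉ : ℝ) < x i + 1 := Int.ceil_lt_add_one _
              linarith
            · by_contra hcon
              push_neg at hcon
              have h5 : ⌈x i⌉ + ((j : ℤ) + 1) + 1 ≤ z i := Int.add_one_le_iff.2 hcon
              have h5' : (⌈x i⌉ : ℝ) + ((j : ℝ) + 1) + 1 ≤ (z i : ℝ) := by exact_mod_cast h5
              have h6 : x i ≤ (⌈x i⌉ : ℝ) := Int.le_ceil _
              linarith
          have hcardP : (Fintype.piFinset
              (fun i : Fin n => Finset.Icc (⌈x i⌉ - ((j : ℤ) + 2)) (⌈x i⌉ + ((j : ℤ) + 1)))).card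
              = (2 * j + 4) ^ n := by
            rw [Fintype.card_piFinset]
            have hIcc : ∀ i : Fin n,
                (Finset.Icc (⌈x i⌉ - ((j : ℤ) + 2)) (⌈x i⌉ + ((j : ℤ) + 1))).card = 2 * j + 4 := by
              intro i
              rw [Int.card_Icc]
              omega
            rw [Finset.prod_congr rfl (fun i _ => hIcc i), Finset.prod_const,
              Finset.card_univ, Fintype.card_fin]
          have hcc := Finset.card_le_card hsubP
          rw [hcardP] at hcc
          show ((((s1.image zf).filter (fun z => ⌊M z⌋₊ = j)).card : ℝ))
              ≤ (((2 * j + 4) ^ n : ℕ) : ℝ)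
          exact_mod_cast hcc
        · intro z _
          have hfloorle : ((⌊M z⌋₊ : ℝ)) ≤ M z := Nat.floor_le (hM0 z)
          have hexple : Real.exp (-(M z)) ≤ Real.exp (-(⌊M z⌋₊ : ℝ)) :=
            Real.exp_le_exp.2 (by linarith)
          calc (c₂ * Real.log N) * (Real.exp (1/2) * Real.exp (-(M z)))
              ≤ (c₂ * Real.log N) * (Real.exp (1/2) * Real.exp (-(⌊M z⌋₊ : ℝ))) := by
                refine mul_le_mul_of_nonneg_left ?_ hc₂logN
                exact mul_le_mul_of_nonneg_left hexple (Real.exp_nonneg _)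
            _ = (c₂ * Real.log N) * Real.exp (1/2) * Real.exp (-(⌊M z⌋₊ : ℝ)) := by ring
      have step3 : ∑ j ∈ (s1.image zf).image (fun z => ⌊M z⌋₊),
          (((2 * j + 4) ^ n : ℕ) : ℝ) *
            ((c₂ * Real.log N) * Real.exp (1/2) * Real.exp (-(j : ℝ))) ≤
          (c₂ * Real.log N * Real.exp (1/2) * ((6 : ℝ) ^ n * Real.exp 1)) * S₁ := by
        set A : ℝ := c₂ * Real.log N * Real.exp (1/2) with hAdef
        have hA0 : 0 ≤ A := mul_nonneg hc₂logN (Real.exp_nonneg _)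
        have hterm : ∀ j : ℕ,
            (((2 * j + 4) ^ n : ℕ) : ℝ) *
              ((c₂ * Real.log N) * Real.exp (1/2) * Real.exp (-(j : ℝ))) ≤
            (A * ((6 : ℝ) ^ n * Real.exp 1)) * (((j : ℝ) + 1) ^ n * Real.exp (-1) ^ (j + 1)) := by
          intro j
          have hexp : Real.exp (-(j : ℝ)) = Real.exp 1 * Real.exp (-1) ^ (j + 1) := by
            rw [← Real.exp_nat_mul, ← Real.exp_add]
            congr 1
            push_cast
            ring
          have hpow : ((2 * (j : ℝ) + 4)) ^ n ≤ (6 * ((j : ℝ) + 1)) ^ n := by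
            refine pow_le_pow_left₀ (by positivity) ?_ n
            have : (0 : ℝ) ≤ (j : ℝ) := Nat.cast_nonneg j
            linarith
          calc (((2 * j + 4) ^ n : ℕ) : ℝ) *
                ((c₂ * Real.log N) * Real.exp (1/2) * Real.exp (-(j : ℝ)))
              = A * ((2 * (j : ℝ) + 4) ^ n * (Real.exp 1 * Real.exp (-1) ^ (j + 1))) := by
                rw [hexp]
                push_cast
                ring
            _ ≤ A * ((6 * ((j : ℝ) + 1)) ^ n * (Real.exp 1 * Real.exp (-1) ^ (j + 1))) := by
                refine mul_le_mul_of_nonneg_left ?_ hA0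
                exact mul_le_mul_of_nonneg_right hpow (by positivity)
            _ = (A * ((6 : ℝ) ^ n * Real.exp 1)) * (((j : ℝ) + 1) ^ n * Real.exp (-1) ^ (j + 1)) := by
                rw [mul_pow]
                ring
        calc ∑ j ∈ (s1.image zf).image (fun z => ⌊M z⌋₊),
            (((2 * j + 4) ^ n : ℕ) : ℝ) *
              ((c₂ * Real.log N) * Real.exp (1/2) * Real.exp (-(j : ℝ)))
            ≤ ∑ j ∈ (s1.image zf).image (fun z => ⌊M z⌋₊),
              (A * ((6 : ℝ) ^ n * Real.exp 1)) * (((j : ℝ) + 1) ^ n * Real.exp (-1) ^ (j + 1)) :=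
              Finset.sum_le_sum fun j _ => hterm j
          _ = (A * ((6 : ℝ) ^ n * Real.exp 1)) * ∑ j ∈ (s1.image zf).image (fun z => ⌊M z⌋₊),
              (((j : ℝ) + 1) ^ n * Real.exp (-1) ^ (j + 1)) := by rw [Finset.mul_sum]
          _ ≤ (A * ((6 : ℝ) ^ n * Real.exp 1)) * S₁ := by
              refine mul_le_mul_of_nonneg_left ?_ (by positivity)
              exact Summable.sum_le_tsum _ (fun j _ => by positivity) hF₁
          _ = (c₂ * Real.log N * Real.exp (1/2) * ((6 : ℝ) ^ n * Real.exp 1)) * S₁ := by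
              rw [hAdef]
      exact le_trans step1 (le_trans step2 step3)
    rw [hsplit]
    linarith
  -- assemble
  have key : ∀ u : Finset ↥(V \ {x}),
      ∑ y ∈ u, Real.exp (-‖x - (y : EuclideanSpace ℝ (Fin n))‖) ≤
        (c₂ * Real.exp (1/2) * ((6 : ℝ) ^ n * Real.exp 1) * S₁ + c₁ * S₂ / Real.log 2) *
          Real.log N := by
    intro u
    have himg : ∑ a ∈ u.image (fun y : ↥(V \ {x}) => (y : EuclideanSpace ℝ (Fin n))), f a
        = ∑ y ∈ u, Real.exp (-‖x - (y : EuclideanSpace ℝ (Fin n))‖) :=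
      Finset.sum_image (fun a _ b _ h => Subtype.ext h)
    have hsub : (↑(u.image (fun y : ↥(V \ {x}) => (y : EuclideanSpace ℝ (Fin n)))) : Set (EuclideanSpace ℝ (Fin n))) ⊆ V := by
      intro a ha
      rw [Finset.coe_image] at ha
      obtain ⟨y, -, rfl⟩ := ha
      exact y.2.1
    have hmain := main _ hsub
    rw [himg] at hmain
    have hcrown : c₁ * S₂ ≤ (c₁ * S₂ / Real.log 2) * Real.log N := by
      rw [div_mul_eq_mul_div, le_div_iff₀ hlog2]
      exact mul_le_mul_of_nonneg_left hlogN (mul_nonneg hc₁.le hS₂nonneg)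
    have hCeq : (c₂ * Real.exp (1/2) * ((6 : ℝ) ^ n * Real.exp 1) * S₁ +
          c₁ * S₂ / Real.log 2) * Real.log N
        = (c₂ * Real.log N * Real.exp (1/2) * ((6 : ℝ) ^ n * Real.exp 1)) * S₁ +
          (c₁ * S₂ / Real.log 2) * Real.log N := by ring
    rw [hCeq]
    linarith
  have hsumm : Summable (fun y : ↥(V \ {x}) => Real.exp (-‖x - (y : EuclideanSpace ℝ (Fin n))‖)) :=
    summable_of_sum_le (fun y => Real.exp_nonneg _) key
  exact ⟨hsumm, Summable.tsum_le_of_sum_le hsumm key⟩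
end
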